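/- arXiv:1305.4382 — 2 statements merged into one kernel-verified Lean document; each statement's English description precedes it below -/
import Mathlib

section
/- Let N ≥ 3 be an integer and p > 1 a real number. If 3 ≤ N ≤ 10 then N/2 < 1 + 2p/(p−1) + (2/(p−1))√(p²−p). If N ≥ 11 then p < p_c holds if and only if N/2 < 1 + 2p/(p−1) + (2/(p−1))√(p²−p). -/
open MeasureTheory Real Filter
open scoped InnerProductSpace ENNReal Topology

noncomputable section

/-- Euclidean space ℝ^N. -/
abbrev Euc (N : ℕ) := EuclideanSpace ℝ (Fin N)

/-- The Laplacian of a real-valued function on ℝ^N, as the sum of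
the second partial derivatives in the coordinate directions. -/
def lap {N : ℕ} (u : Euc N → ℝ) (x : Euc N) : ℝ :=
  ∑ i : Fin N,
    fderiv ℝ (fun y => fderiv ℝ u y (EuclideanSpace.single i 1)) x
      (EuclideanSpace.single i 1)

/-- The divergence of a vector field on ℝ^N. -/
def divg {N : ℕ} (a : Euc N → Euc N) (x : Euc N) : ℝ :=
  ∑ i : Fin N, fderiv ℝ a x (EuclideanSpace.single i 1) i

/-- The advection term `a(x) · ∇u(x)`. -/
def adv {N : ℕ} (a : Euc N → Euc N) (u : Euc N → ℝ) (x : Euc N) : ℝ :=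
  ⟪a x, gradient u x⟫_ℝ

/-- `u` is a positive smooth solution of `-Δu + a(x)·∇u = u^p` in the open set `Ω`. -/
def IsSolution {N : ℕ} (a : Euc N → Euc N) (p : ℝ) (Ω : Set (Euc N))
    (u : Euc N → ℝ) : Prop :=
  ContDiffOn ℝ (⊤ : ℕ∞) u Ω ∧ (∀ x ∈ Ω, 0 < u x) ∧
    ∀ x ∈ Ω, -lap u x + adv a u x = u x ^ p

/-- `u` is a stable solution of `-Δu + a(x)·∇u = u^p` in `Ω`: it is a positive smooth
solution and there is a smooth positive `E` with `-ΔE + a(x)·∇E ≥ p u^(p-1) E` in `Ω`. -/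
def IsStableSolution {N : ℕ} (a : Euc N → Euc N) (p : ℝ) (Ω : Set (Euc N))
    (u : Euc N → ℝ) : Prop :=
  IsSolution a p Ω u ∧
    ∃ E : Euc N → ℝ, ContDiffOn ℝ (⊤ : ℕ∞) E Ω ∧ (∀ x ∈ Ω, 0 < E x) ∧
      ∀ x ∈ Ω, p * u x ^ (p - 1) * E x ≤ -lap E x + adv a E x

/-- The Joseph–Lundgren exponent for `N ≥ 11`. -/
def pJL (N : ℕ) : ℝ :=
  (((N : ℝ) - 2) ^ 2 - 4 * N + 8 * Real.sqrt ((N : ℝ) - 1)) /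
    (((N : ℝ) - 2) * ((N : ℝ) - 10))

set_option maxHeartbeats 2000000 in
/-- For `3 ≤ N ≤ 10` the inequality
`N/2 < 1 + 2p/(p-1) + (2/(p-1))√(p²-p)` always holds, and for `N ≥ 11` it is
equivalent to `p < p_c`. -/
theorem pc_iff_condition (N : ℕ) (hN : 3 ≤ N) (p : ℝ) (hp : 1 < p) :
    (N ≤ 10 →
      (N : ℝ) / 2 <
        1 + 2 * p / (p - 1) + 2 / (p - 1) * Real.sqrt (p ^ 2 - p)) ∧
    (11 ≤ N →
      (p < pJL N ↔
        (N : ℝ) / 2 <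
          1 + 2 * p / (p - 1) + 2 / (p - 1) * Real.sqrt (p ^ 2 - p))) := by
  have hp1 : 0 < p - 1 := by linarith
  have hpp : 0 ≤ p ^ 2 - p := by nlinarith
  set s := Real.sqrt (p ^ 2 - p) with hsdef
  have hs2 : s ^ 2 = p ^ 2 - p := Real.sq_sqrt hpp
  have hs0 : 0 < s := Real.sqrt_pos.mpr (by nlinarith)
  have hrhs : (1 + 2 * p / (p - 1) + 2 / (p - 1) * s) = (3 * p - 1 + 2 * s) / (p - 1) := by
    field_simp; ring
  constructor
  · intro hN10
    have hn10 : (N : ℝ) ≤ 10 := by exact_mod_cast hN10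
    rw [hrhs, lt_div_iff₀ hp1]
    rcases le_or_gt p 2 with h2 | h2
    · nlinarith
    · have hps : s > p - 2 := by
        by_contra h
        push_neg at h
        nlinarith [mul_self_le_mul_self hs0.le h]
      nlinarith
  · intro hN11
    have hn11 : (11 : ℝ) ≤ (N : ℝ) := by exact_mod_cast hN11
    have hD : 0 < ((N:ℝ) - 2) * ((N:ℝ) - 10) := by nlinarith
    rw [hrhs, pJL, lt_div_iff₀ hD, div_lt_div_iff₀ (by norm_num : (0:ℝ) < 2) hp1]
    set n := (N : ℝ) with hndef
    set r := Real.sqrt (n - 1) with hrdef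
    have hr0 : 0 < r := Real.sqrt_pos.mpr (by linarith)
    have hr2 : r ^ 2 = n - 1 := Real.sq_sqrt (by linarith)
    have hn6 : 0 < n - 6 := by linarith
    set A := n / 2 * (p - 1) - (3 * p - 1) with hAdef
    set X := p * ((n - 2) * (n - 10)) - ((n - 2) ^ 2 - 4 * n) with hXdef
    clear_value s n r A X
    have hid : ((n-2)*(n-10)) * (4*A^2 - 16*s^2) = X^2 - 64*r^2 := by
      rw [hAdef, hXdef, hs2, hr2]; ring
    constructor
    · intro h
      by_contra h'
      push_neg at h'
      have hA : 2 * s ≤ A := by rw [hAdef]; linarith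
      have hX8 : X < 8 * r := by rw [hXdef]; linarith
      have hA2 : 4 * s ^ 2 ≤ A ^ 2 := by nlinarith
      have hsq : 64 * r ^ 2 ≤ X ^ 2 := by
        nlinarith [mul_nonneg hD.le (by linarith : (0:ℝ) ≤ 4*A^2 - 16*s^2)]
      have h4 : X ≤ -(8 * r) := by
        by_contra h4
        push_neg at h4
        nlinarith [mul_pos (by linarith : 0 < 8*r - X) (by linarith : 0 < X + 8*r)]
      have h3 : n - 2 < (n - 6) * p := by
        have : 0 < A := by linarith [mul_pos (by norm_num : (0:ℝ) < 2) hs0]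
        rw [hAdef] at this; nlinarith
      have h5 : r * (n - 6) < n + 2 := by
        nlinarith [mul_lt_mul_of_pos_right h3 hD,
          mul_le_mul_of_nonneg_left h4 (le_of_lt hn6)]
      have h6 : (n - 1) * (n - 6) ^ 2 < (n + 2) ^ 2 := by
        nlinarith [mul_self_lt_mul_self (mul_nonneg hr0.le hn6.le) h5]
      have hcube : (0:ℝ) ≤ (n - 11) * (n ^ 2 - 3 * n + 11) :=
        mul_nonneg (by linarith) (by nlinarith)
      nlinarith
    · intro h
      have hA : A < 2 * s := by rw [hAdef]; linarith
      have goal : X < 8 * r := by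
        rcases lt_or_ge (X ^ 2) ((8 * r) ^ 2) with hc | hc
        · nlinarith [sq_nonneg (X - 8*r)]
        · have hA2 : 4 * s ^ 2 ≤ A ^ 2 := by nlinarith
          have hA0 : A < 0 := by
            rcases lt_or_ge A 0 with h0 | h0
            · exact h0
            · exfalso; nlinarith
          have h8 : (n - 6) * p < n - 2 := by rw [hAdef] at hA0; nlinarith
          have h9 : (n - 6) * (p * ((n-2)*(n-10))) < (n - 6) * ((n-2)^2 - 4*n) := by
            nlinarith [mul_lt_mul_of_pos_right h8 hD]
          have h10 : X < 0 := by
            rw [hXdef]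
            nlinarith [mul_pos hn6 (show (0:ℝ) < ((n-2)^2-4*n) - p*((n-2)*(n-10)) from by nlinarith)]
          linarith [mul_pos (by norm_num : (0:ℝ) < 8) hr0]
      rw [hXdef] at goal; linarith
end
end

section
/- Let p > 1 be a real number. Then there exists a constant C = C_p > 0 such that for all real numbers w > 0 and φ̂, φ ∈ ℝ one has | |φ̂+w|^p − |φ+w|^p − p w^{p−1}(φ̂−φ) | ≤ C ( w^{p−2}(|φ̂| + |φ|) + |φ̂|^{p−1} + |φ|^{p−1} ) |φ̂ − φ|. -/
open Real Set Filter

lemma abs_rpow_mul_self {p : ℝ} (hp : 1 < p) (x : ℝ) :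
    |(|x| ^ (p - 2) * x)| = |x| ^ (p - 1) := by
  rcases eq_or_ne x 0 with rfl | hx
  · simp [Real.zero_rpow (by linarith : p - 1 ≠ 0)]
  · have hax : (0:ℝ) < |x| := abs_pos.2 hx
    rw [abs_mul, abs_of_pos (Real.rpow_pos_of_pos hax _)]
    nth_rewrite 2 [← Real.rpow_one |x|]
    rw [← Real.rpow_add hax, show p - 2 + 1 = p - 1 by ring]

lemma deriv_dev_bound {p : ℝ} (hp : 1 < p) {w t M : ℝ} (hw : 0 < w) (ht : |t| ≤ M) :
    |p * |t + w| ^ (p - 2) * (t + w) - p * w ^ (p - 1)| ≤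
      (p * (p - 1) * ((1/2 : ℝ) ^ (p - 2) + (3/2 : ℝ) ^ (p - 2)) + p * ((3:ℝ) ^ (p - 1) + (2:ℝ) ^ (p - 1)))
        * (w ^ (p - 2) * M + M ^ (p - 1)) := by
  have hM : 0 ≤ M := (abs_nonneg t).trans ht
  have hp0 : 0 < p := by linarith
  obtain ⟨c, hc⟩ : ∃ c : ℝ, c = (1/2 : ℝ) ^ (p - 2) + (3/2 : ℝ) ^ (p - 2) := ⟨_, rfl⟩
  have hcpos : 0 < c := by rw [hc]; positivity
  obtain ⟨K, hK⟩ : ∃ K : ℝ, K = p * (p - 1) * c + p * ((3:ℝ) ^ (p - 1) + (2:ℝ) ^ (p - 1)) := ⟨_, rfl⟩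
  have hpc : 0 ≤ p * (p - 1) * c := by
    nlinarith [mul_pos (mul_pos hp0 (by linarith : (0:ℝ) < p - 1)) hcpos]
  have h32 : 0 < p * ((3:ℝ) ^ (p - 1) + (2:ℝ) ^ (p - 1)) := by positivity
  have hK1 : p * (p - 1) * c ≤ K := by rw [hK]; linarith
  have hK2 : p * ((3:ℝ) ^ (p - 1) + (2:ℝ) ^ (p - 1)) ≤ K := by rw [hK]; linarith
  have hKpos : 0 ≤ K := le_trans hpc hK1
  have hB1 : 0 ≤ w ^ (p - 2) * M := by positivity
  have hB2 : 0 ≤ M ^ (p - 1) := by positivity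
  rcases le_or_gt |t| (w / 2) with hcase | hcase
  · -- |t| ≤ w/2, so t + w ∈ [w/2, 3w/2]
    obtain ⟨ha1, ha2⟩ := abs_le.1 hcase
    have h1 : w / 2 ≤ t + w := by linarith
    have h2 : t + w ≤ 3 * w / 2 := by linarith
    have htw : 0 < t + w := by linarith
    have hsub : Set.uIcc w (t + w) ⊆ Set.Icc (w/2) (3*w/2) :=
      Set.uIcc_subset_Icc ⟨by linarith, by linarith⟩ ⟨h1, h2⟩
    have key : |(t + w) ^ (p - 1) - w ^ (p - 1)| ≤ ((p - 1) * (c * w ^ (p - 2))) * |t| := by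
      have mvt := Convex.norm_image_sub_le_of_norm_hasDerivWithin_le
        (f := fun u : ℝ => u ^ (p - 1)) (f' := fun u : ℝ => (p - 1) * u ^ (p - 2))
        (s := Set.uIcc w (t + w)) (C := (p - 1) * (c * w ^ (p - 2)))
        (fun u hu => by
          have hupos : 0 < u := lt_of_lt_of_le (by linarith) (hsub hu).1
          have h := (Real.hasDerivAt_rpow_const (p := p - 1)
            (Or.inl hupos.ne')).hasDerivWithinAt (s := Set.uIcc w (t + w))
          simpa [show p - 1 - 1 = p - 2 by ring] using h)
        (fun u hu => by
          obtain ⟨hu1, hu2⟩ := hsub hu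
          have hupos : 0 < u := by linarith
          have hbound : u ^ (p - 2) ≤ c * w ^ (p - 2) := by
            have e1 : (w / 2) ^ (p - 2) = (1/2 : ℝ) ^ (p - 2) * w ^ (p - 2) := by
              rw [show w / 2 = (1/2) * w by ring, Real.mul_rpow (by norm_num) hw.le]
            have e2 : (3 * w / 2) ^ (p - 2) = (3/2 : ℝ) ^ (p - 2) * w ^ (p - 2) := by
              rw [show 3 * w / 2 = (3/2) * w by ring, Real.mul_rpow (by norm_num) hw.le]
            have t1 : 0 ≤ (1/2 : ℝ) ^ (p - 2) * w ^ (p - 2) := by positivity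
            have t2 : 0 ≤ (3/2 : ℝ) ^ (p - 2) * w ^ (p - 2) := by positivity
            have hcd : c * w ^ (p - 2) = (1/2 : ℝ) ^ (p - 2) * w ^ (p - 2)
                + (3/2 : ℝ) ^ (p - 2) * w ^ (p - 2) := by rw [hc]; ring
            rcases le_or_gt 0 (p - 2) with hq | hq
            · have h := Real.rpow_le_rpow hupos.le hu2 hq
              rw [e2] at h; linarith
            · have h := Real.rpow_le_rpow_of_nonpos (by linarith : (0:ℝ) < w/2) hu1 hq.le
              rw [e1] at h; linarith
          rw [Real.norm_eq_abs, abs_mul, abs_of_pos (by linarith : (0:ℝ) < p - 1),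
            abs_of_pos (Real.rpow_pos_of_pos hupos _)]
          exact mul_le_mul_of_nonneg_left hbound (by linarith))
        (convex_uIcc _ _) Set.left_mem_uIcc Set.right_mem_uIcc
      rw [Real.norm_eq_abs, Real.norm_eq_abs] at mvt
      simpa using mvt
    have hsplit : |t + w| ^ (p - 2) * (t + w) = (t + w) ^ (p - 1) := by
      rw [abs_of_pos htw]
      nth_rewrite 2 [← Real.rpow_one (t + w)]
      rw [← Real.rpow_add htw, show p - 2 + 1 = p - 1 by ring]
    calc |p * |t + w| ^ (p - 2) * (t + w) - p * w ^ (p - 1)|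
        = p * |(t + w) ^ (p - 1) - w ^ (p - 1)| := by
          rw [mul_assoc, hsplit, ← mul_sub, abs_mul, abs_of_pos hp0]
      _ ≤ p * (((p - 1) * (c * w ^ (p - 2))) * |t|) :=
          mul_le_mul_of_nonneg_left key hp0.le
      _ ≤ (p * (p - 1) * c) * (w ^ (p - 2) * M) := by
          have hwp : 0 ≤ w ^ (p - 2) := by positivity
          have hnn : 0 ≤ p * (p - 1) * c * w ^ (p - 2) :=
            mul_nonneg (mul_nonneg (mul_nonneg hp0.le (by linarith)) hcpos.le) hwp
          nlinarith [mul_le_mul_of_nonneg_left ht hnn]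
      _ ≤ K * (w ^ (p - 2) * M + M ^ (p - 1)) := by
          nlinarith [mul_le_mul_of_nonneg_right hK1 hB1, mul_nonneg hKpos hB2]
      _ = (p * (p - 1) * ((1/2 : ℝ) ^ (p - 2) + (3/2 : ℝ) ^ (p - 2)) + p * ((3:ℝ) ^ (p - 1) + (2:ℝ) ^ (p - 1)))
            * (w ^ (p - 2) * M + M ^ (p - 1)) := by rw [hK, hc]
  · -- |t| > w / 2
    have htpos : 0 < |t| := by linarith
    have hMpos : 0 < M := lt_of_lt_of_le htpos ht
    have hb1 : |t + w| ≤ 3 * M := by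
      calc |t + w| ≤ |t| + |w| := abs_add_le t w
        _ = |t| + w := by rw [abs_of_pos hw]
        _ ≤ |t| + 2 * |t| := by linarith
        _ = 3 * |t| := by ring
        _ ≤ 3 * M := by linarith
    have hb2 : w ≤ 2 * M := by linarith
    have e1 : |t + w| ^ (p - 1) ≤ 3 ^ (p - 1) * M ^ (p - 1) := by
      calc |t + w| ^ (p - 1) ≤ (3 * M) ^ (p - 1) :=
            Real.rpow_le_rpow (abs_nonneg _) hb1 (by linarith)
        _ = 3 ^ (p - 1) * M ^ (p - 1) := Real.mul_rpow (by norm_num) hM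
    have e2 : w ^ (p - 1) ≤ 2 ^ (p - 1) * M ^ (p - 1) := by
      calc w ^ (p - 1) ≤ (2 * M) ^ (p - 1) :=
            Real.rpow_le_rpow hw.le hb2 (by linarith)
        _ = 2 ^ (p - 1) * M ^ (p - 1) := Real.mul_rpow (by norm_num) hM
    calc |p * |t + w| ^ (p - 2) * (t + w) - p * w ^ (p - 1)|
        ≤ |p * |t + w| ^ (p - 2) * (t + w)| + |p * w ^ (p - 1)| := abs_sub _ _
      _ = p * |t + w| ^ (p - 1) + p * w ^ (p - 1) := by
          rw [mul_assoc, abs_mul, abs_of_pos hp0, abs_rpow_mul_self hp,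
            abs_of_pos (mul_pos hp0 (Real.rpow_pos_of_pos hw _))]
      _ ≤ p * (3 ^ (p - 1) * M ^ (p - 1)) + p * (2 ^ (p - 1) * M ^ (p - 1)) := by
          have i1 := mul_le_mul_of_nonneg_left e1 hp0.le
          have i2 := mul_le_mul_of_nonneg_left e2 hp0.le
          linarith
      _ = (p * ((3:ℝ) ^ (p - 1) + (2:ℝ) ^ (p - 1))) * M ^ (p - 1) := by ring
      _ ≤ K * (w ^ (p - 2) * M + M ^ (p - 1)) := by
          nlinarith [mul_le_mul_of_nonneg_right hK2 hB2, mul_nonneg hKpos hB1]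
      _ = (p * (p - 1) * ((1/2 : ℝ) ^ (p - 2) + (3/2 : ℝ) ^ (p - 2)) + p * ((3:ℝ) ^ (p - 1) + (2:ℝ) ^ (p - 1)))
            * (w ^ (p - 2) * M + M ^ (p - 1)) := by rw [hK, hc]

/-- `(a+b)^(p-1) ≤ 2^(p-1) * (a^(p-1) + b^(p-1))` for nonneg `a, b`. -/
lemma add_rpow_le {p : ℝ} (hp : 1 < p) {a b : ℝ} (ha : 0 ≤ a) (hb : 0 ≤ b) :
    (a + b) ^ (p - 1) ≤ 2 ^ (p - 1) * (a ^ (p - 1) + b ^ (p - 1)) := by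
  have hq : (0:ℝ) ≤ p - 1 := by linarith
  rcases le_total a b with h | h
  · calc (a + b) ^ (p - 1) ≤ (2 * b) ^ (p - 1) :=
          Real.rpow_le_rpow (by linarith) (by linarith) hq
      _ = 2 ^ (p - 1) * b ^ (p - 1) := Real.mul_rpow (by norm_num) hb
      _ ≤ 2 ^ (p - 1) * (a ^ (p - 1) + b ^ (p - 1)) := by
          have h1 : 0 ≤ a ^ (p - 1) := by positivity
          have h2 : (0:ℝ) < 2 ^ (p - 1) := by positivity
          nlinarith
  · calc (a + b) ^ (p - 1) ≤ (2 * a) ^ (p - 1) :=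
          Real.rpow_le_rpow (by linarith) (by linarith) hq
      _ = 2 ^ (p - 1) * a ^ (p - 1) := Real.mul_rpow (by norm_num) ha
      _ ≤ 2 ^ (p - 1) * (a ^ (p - 1) + b ^ (p - 1)) := by
          have h1 : 0 ≤ b ^ (p - 1) := by positivity
          have h2 : (0:ℝ) < 2 ^ (p - 1) := by positivity
          nlinarith



/-- For `p > 1` there is a constant `C = C_p > 0` such that for all
`w > 0` and `φ̂, φ ∈ ℝ`:
`| |φ̂+w|^p − |φ+w|^p − p w^(p−1)(φ̂−φ) | ≤ C (w^(p−2)(|φ̂|+|φ|) + |φ̂|^(p−1) + |φ|^(p−1)) |φ̂−φ|`. -/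
theorem lipschitz_remainder_bound (p : ℝ) (hp : 1 < p) :
    ∃ C : ℝ, 0 < C ∧
      ∀ (w φh φ : ℝ), 0 < w →
        |(|φh + w| ^ p) - |φ + w| ^ p - p * w ^ (p - 1) * (φh - φ)| ≤
          C * (w ^ (p - 2) * (|φh| + |φ|) + |φh| ^ (p - 1) + |φ| ^ (p - 1)) *
            |φh - φ| := by
  have hp0 : 0 < p := by linarith
  obtain ⟨K, hK⟩ : ∃ K : ℝ, K = p * (p - 1) * ((1/2 : ℝ) ^ (p - 2) + (3/2 : ℝ) ^ (p - 2))
      + p * ((3:ℝ) ^ (p - 1) + (2:ℝ) ^ (p - 1)) := ⟨_, rfl⟩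
  have hKpos : 0 < K := by
    rw [hK]
    have h1 : 0 < (1/2 : ℝ) ^ (p - 2) + (3/2 : ℝ) ^ (p - 2) := by positivity
    have h2 : 0 < (3:ℝ) ^ (p - 1) + (2:ℝ) ^ (p - 1) := by positivity
    nlinarith [mul_pos hp0 h2,
      mul_nonneg (mul_nonneg hp0.le (by linarith : (0:ℝ) ≤ p - 1)) h1.le]
  have h2p : (0:ℝ) < 2 ^ (p - 1) := by positivity
  refine ⟨K * (1 + 2 ^ (p - 1)), by positivity, fun w φh φ hw => ?_⟩
  have ha : 0 ≤ |φh| := abs_nonneg _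
  have hb : 0 ≤ |φ| := abs_nonneg _
  obtain ⟨M, hM⟩ : ∃ M : ℝ, M = |φh| + |φ| := ⟨_, rfl⟩
  have hMnn : 0 ≤ M := by rw [hM]; linarith
  -- MVT on F x = |x+w|^p - p w^(p-1) x over uIcc φ φh
  have mvt := Convex.norm_image_sub_le_of_norm_hasDerivWithin_le
    (f := fun x : ℝ => |x + w| ^ p - p * w ^ (p - 1) * x)
    (f' := fun x : ℝ => p * |x + w| ^ (p - 2) * (x + w) - p * w ^ (p - 1))
    (s := Set.uIcc φ φh) (C := K * (w ^ (p - 2) * M + M ^ (p - 1)))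
    (fun x hx => by
      have h1 : HasDerivAt (fun x : ℝ => |x + w| ^ p) (p * |x + w| ^ (p - 2) * (x + w)) x := by
        have := (hasDerivAt_abs_rpow (x + w) hp).comp x ((hasDerivAt_id x).add_const w)
        simpa [Function.comp_def] using this
      have h2 : HasDerivAt (fun x : ℝ => p * w ^ (p - 1) * x) (p * w ^ (p - 1)) x := by
        simpa using (hasDerivAt_id x).const_mul (p * w ^ (p - 1))
      exact (h1.sub h2).hasDerivWithinAt)
    (fun x hx => by
      have hxM : |x| ≤ M := by
        rcases Set.mem_uIcc.1 hx with ⟨h1, h2⟩ | ⟨h1, h2⟩ <;>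
          · rw [hM, abs_le]
            constructor <;>
              nlinarith [le_abs_self φ, neg_abs_le φ, le_abs_self φh, neg_abs_le φh]
      have := deriv_dev_bound hp hw hxM
      rw [Real.norm_eq_abs]
      calc |p * |x + w| ^ (p - 2) * (x + w) - p * w ^ (p - 1)|
          ≤ (p * (p - 1) * ((1/2 : ℝ) ^ (p - 2) + (3/2 : ℝ) ^ (p - 2))
              + p * ((3:ℝ) ^ (p - 1) + (2:ℝ) ^ (p - 1))) * (w ^ (p - 2) * M + M ^ (p - 1)) := this
        _ = K * (w ^ (p - 2) * M + M ^ (p - 1)) := by rw [hK])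
    (convex_uIcc _ _) Set.left_mem_uIcc Set.right_mem_uIcc
  rw [Real.norm_eq_abs, Real.norm_eq_abs] at mvt
  have heq : |φh + w| ^ p - p * w ^ (p - 1) * φh - (|φ + w| ^ p - p * w ^ (p - 1) * φ)
      = |φh + w| ^ p - |φ + w| ^ p - p * w ^ (p - 1) * (φh - φ) := by ring
  rw [heq] at mvt
  refine mvt.trans ?_
  have habs : 0 ≤ |φh - φ| := abs_nonneg _
  have key : K * (w ^ (p - 2) * M + M ^ (p - 1))
      ≤ K * (1 + 2 ^ (p - 1)) * (w ^ (p - 2) * (|φh| + |φ|) + |φh| ^ (p - 1) + |φ| ^ (p - 1)) := by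
    have hMp : M ^ (p - 1) ≤ 2 ^ (p - 1) * (|φh| ^ (p - 1) + |φ| ^ (p - 1)) := by
      rw [hM]; exact add_rpow_le hp ha hb
    have hwp : 0 ≤ w ^ (p - 2) * M := mul_nonneg (by positivity) hMnn
    have hap : 0 ≤ |φh| ^ (p - 1) := by positivity
    have hbp : 0 ≤ |φ| ^ (p - 1) := by positivity
    rw [← hM]
    nlinarith [mul_le_mul_of_nonneg_left hMp hKpos.le,
      mul_nonneg (mul_nonneg hKpos.le h2p.le) hwp,
      mul_nonneg hKpos.le (add_nonneg hap hbp),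
      mul_nonneg (mul_nonneg hKpos.le h2p.le) (add_nonneg hap hbp)]
  exact mul_le_mul_of_nonneg_right key habs
end
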